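/- For every λ ∈ [0,1] and every complex 2×2 matrix ρ, the unbiased von Neumann–Lüders update over the two measurement settings {E_{x(+)}, E_{x(−)}} and {E_{z(+)}, E_{z(−)}} equals the channel Φ_λ: (1/2)[√E_{x(+)} ρ √E_{x(+)} + √E_{x(−)} ρ √E_{x(−)}] + (1/2)[√E_{z(+)} ρ √E_{z(+)} + √E_{z(−)} ρ √E_{z(−)}] = ((2+√(1−λ²))/4)·ρ + (1/4)·σ_z ρ σ_z + ((1−√(1−λ²))/4)·σ_x ρ σ_x. -/

import Mathlib

open Matrix
open scoped ComplexOrder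

noncomputable section

/-- The positive semidefinite square root of a positive semidefinite matrix
(restored with its former Mathlib definition, removed since). -/
def Matrix.PosSemidef.sqrt {n 𝕜 : Type*} [Fintype n] [RCLike 𝕜] [DecidableEq n]
    {A : Matrix n n 𝕜} (hA : A.PosSemidef) : Matrix n n 𝕜 :=
  hA.1.eigenvectorUnitary.1 * diagonal ((↑) ∘ (√·) ∘ hA.1.eigenvalues) *
  (star hA.1.eigenvectorUnitary : Matrix n n 𝕜)

/-- The Pauli matrix σ_x. -/
def sigx : Matrix (Fin 2) (Fin 2) ℂ := !![0, 1; 1, 0]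

/-- The Pauli matrix σ_z. -/
def sigz : Matrix (Fin 2) (Fin 2) ℂ := !![1, 0; 0, -1]

/-- The unsharp effect `E_{x(+)} = (I + λσ_x)/2`. -/
def effectXPlus (lam : ℝ) : Matrix (Fin 2) (Fin 2) ℂ :=
  (1/2 : ℂ) • ((1 : Matrix (Fin 2) (Fin 2) ℂ) + (lam : ℂ) • sigx)

/-- The unsharp effect `E_{x(−)} = (I − λσ_x)/2`. -/
def effectXMinus (lam : ℝ) : Matrix (Fin 2) (Fin 2) ℂ :=
  (1/2 : ℂ) • ((1 : Matrix (Fin 2) (Fin 2) ℂ) - (lam : ℂ) • sigx)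

/-- The sharp effect `E_{z(+)} = (I + σ_z)/2`. -/
def effectZPlus : Matrix (Fin 2) (Fin 2) ℂ :=
  (1/2 : ℂ) • ((1 : Matrix (Fin 2) (Fin 2) ℂ) + sigz)

/-- The sharp effect `E_{z(−)} = (I − σ_z)/2`. -/
def effectZMinus : Matrix (Fin 2) (Fin 2) ℂ :=
  (1/2 : ℂ) • ((1 : Matrix (Fin 2) (Fin 2) ℂ) - sigz)

/-- The single-qubit map
`Φ_λ(ρ) = ((2+√(1−λ²))/4)ρ + (1/4)σ_z ρ σ_z + ((1−√(1−λ²))/4)σ_x ρ σ_x`. -/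
def phi (lam : ℝ) (ρ : Matrix (Fin 2) (Fin 2) ℂ) : Matrix (Fin 2) (Fin 2) ℂ :=
  (((2 + Real.sqrt (1 - lam ^ 2)) / 4 : ℝ) : ℂ) • ρ
    + (1/4 : ℂ) • (sigz * ρ * sigz)
    + (((1 - Real.sqrt (1 - lam ^ 2)) / 4 : ℝ) : ℂ) • (sigx * ρ * sigx)

/-! Both measurement settings consist of the effects `(1 ± λσ)/2` for a Hermitian involution `σ`
(with `λ = 1` for `σ_z`). With `s = √((1+λ)/2)` and `t = √((1-λ)/2)`, the positive square roots
of these effects are `a ± bσ` where `a = (s+t)/2` and `b = (s-t)/2`, since `a² + b² = 1/2` and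
`2ab = λ/2`. Adding the two Lüders terms cancels the cross terms `ab(σρ + ρσ)` and leaves
`2a²ρ + 2b²σρσ`, where `2a² = (1 + √(1-λ²))/2` and `2b² = (1 - √(1-λ²))/2` because
`st = √(1-λ²)/2`. -/

theorem smul_one_add_smul_sq_of_mul_self {R A : Type*} [CommSemiring R] [Semiring A]
    [Algebra R A] {σ : A} (hσσ : σ * σ = 1) (a b : R) :
    (a • (1 : A) + b • σ) ^ 2 = (a ^ 2 + b ^ 2) • (1 : A) + (2 * a * b) • σ := by
  simp only [sq, add_mul, mul_add, smul_mul_assoc, mul_smul_comm, one_mul, mul_one, hσσ]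
  module

theorem smul_one_add_smul_sandwich_add {R A : Type*} [CommRing R] [Ring A] [Algebra R A]
    (σ ρ : A) (a b : R) :
    (a • (1 : A) + b • σ) * ρ * (a • 1 + b • σ) + (a • (1 : A) - b • σ) * ρ * (a • 1 - b • σ)
      = (2 * a ^ 2) • ρ + (2 * b ^ 2) • (σ * ρ * σ) := by
  simp only [add_mul, mul_add, sub_mul, mul_sub, smul_mul_assoc, mul_smul_comm, one_mul,
    mul_one]
  module

theorem Real.sqrt_half_one_add_mul_sqrt_half_one_sub {x : ℝ} (hx : -1 ≤ x) :
    √((1 + x) / 2) * √((1 - x) / 2) = √(1 - x ^ 2) / 2 := by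
  rw [← Real.sqrt_mul (by linarith),
    show (1 + x) / 2 * ((1 - x) / 2) = (1 - x ^ 2) / 2 ^ 2 by ring,
    Real.sqrt_div' _ (by norm_num), Real.sqrt_sq zero_le_two]

namespace Matrix

variable {n 𝕜 : Type*} [Fintype n] [DecidableEq n] [RCLike 𝕜]

theorem PosSemidef.sqrt_eq_of_sq_eq {A B : Matrix n n 𝕜} (hA : A.PosSemidef)
    (hB : B.PosSemidef) (h : B ^ 2 = A) : hA.sqrt = B := by
  have hsqrt : hA.sqrt = cfc Real.sqrt A := by
    rw [hA.1.cfc_eq]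
    simp [IsHermitian.cfc, PosSemidef.sqrt, Unitary.conjStarAlgAut_apply]
  have hBs : IsSelfAdjoint B := hB.1
  rw [hsqrt, ← h, ← cfc_comp_pow (f := Real.sqrt) (n := 2) B
    (hf := Real.continuous_sqrt.continuousOn) (ha := hBs)]
  refine (cfc_congr fun x hx => ?_).trans (cfc_id' ℝ B (ha := hBs))
  rw [hB.1.spectrum_real_eq_range_eigenvalues] at hx
  obtain ⟨i, rfl⟩ := hx
  simp [Real.sqrt_sq (hB.eigenvalues_nonneg i)]

section Involution

variable {σ : Matrix n n 𝕜}

theorem posSemidef_one_add_of_involution (hσ : σᴴ = σ) (hσσ : σ * σ = 1) :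
    (1 + σ).PosSemidef := by
  have h : (1 + σ)ᴴ * (1 + σ) = (2 : 𝕜) • (1 + σ) := by
    simp only [conjTranspose_add, conjTranspose_one, hσ, add_mul, mul_add, hσσ, one_mul,
      mul_one]
    module
  have h2 := (posSemidef_conjTranspose_mul_self (1 + σ)).smul (a := (1/2 : 𝕜))
    (one_div_nonneg.2 zero_le_two)
  rwa [h, smul_smul, one_div_mul_cancel two_ne_zero, one_smul] at h2

theorem posSemidef_smul_one_add_smul_of_involution (hσ : σᴴ = σ) (hσσ : σ * σ = 1)
    {a b : ℝ} (hab : |b| ≤ a) : ((a : 𝕜) • (1 : Matrix n n 𝕜) + (b : 𝕜) • σ).PosSemidef := by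
  have hneg : (-σ)ᴴ = -σ := by rw [conjTranspose_neg, hσ]
  have hnegneg : -σ * -σ = 1 := by rw [neg_mul_neg, hσσ]
  have hsplit : (a : 𝕜) • (1 : Matrix n n 𝕜) + (b : 𝕜) • σ
      = (((a + b) / 2 : ℝ) : 𝕜) • (1 + σ) + (((a - b) / 2 : ℝ) : 𝕜) • (1 + -σ) := by
    push_cast
    module
  rw [hsplit]
  obtain ⟨h1, h2⟩ := abs_le.1 hab
  exact ((posSemidef_one_add_of_involution hσ hσσ).smul
    (RCLike.ofReal_nonneg.2 (by linarith))).add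
    ((posSemidef_one_add_of_involution hneg hnegneg).smul (RCLike.ofReal_nonneg.2 (by linarith)))

theorem PosSemidef.sqrt_eq_smul_one_add_smul_of_involution (hσ : σᴴ = σ) (hσσ : σ * σ = 1)
    {A : Matrix n n 𝕜} (hA : A.PosSemidef) {a b : ℝ} (hab : |b| ≤ a)
    (hA_eq : A = ((a ^ 2 + b ^ 2 : ℝ) : 𝕜) • 1 + ((2 * a * b : ℝ) : 𝕜) • σ) :
    hA.sqrt = (a : 𝕜) • 1 + (b : 𝕜) • σ :=
  hA.sqrt_eq_of_sq_eq (posSemidef_smul_one_add_smul_of_involution hσ hσσ hab) <| by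
    rw [smul_one_add_smul_sq_of_mul_self hσσ, hA_eq]
    push_cast
    rfl

theorem luders_sum_of_involution (hσ : σᴴ = σ) (hσσ : σ * σ = 1) {lam : ℝ} (hlam : |lam| ≤ 1)
    {A B : Matrix n n 𝕜} (hA : A.PosSemidef) (hB : B.PosSemidef)
    (hA_eq : A = (1 / 2 : 𝕜) • (1 + (lam : 𝕜) • σ))
    (hB_eq : B = (1 / 2 : 𝕜) • (1 - (lam : 𝕜) • σ)) (ρ : Matrix n n 𝕜) :
    hA.sqrt * ρ * hA.sqrt + hB.sqrt * ρ * hB.sqrt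
      = (((1 + √(1 - lam ^ 2)) / 2 : ℝ) : 𝕜) • ρ
        + (((1 - √(1 - lam ^ 2)) / 2 : ℝ) : 𝕜) • (σ * ρ * σ) := by
  obtain ⟨hlam₀, hlam₁⟩ := abs_le.1 hlam
  set s := √((1 + lam) / 2)
  set t := √((1 - lam) / 2)
  have hs : s ^ 2 = (1 + lam) / 2 := Real.sq_sqrt (by linarith)
  have ht : t ^ 2 = (1 - lam) / 2 := Real.sq_sqrt (by linarith)
  have hst : s * t = √(1 - lam ^ 2) / 2 := Real.sqrt_half_one_add_mul_sqrt_half_one_sub hlam₀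
  have hs₀ : 0 ≤ s := Real.sqrt_nonneg _
  have ht₀ : 0 ≤ t := Real.sqrt_nonneg _
  have hab : |(s - t) / 2| ≤ (s + t) / 2 := abs_le.2 ⟨by linarith, by linarith⟩
  have hab' : |-((s - t) / 2)| ≤ (s + t) / 2 := by rwa [abs_neg]
  have hnorm : ((s + t) / 2) ^ 2 + ((s - t) / 2) ^ 2 = 1 / 2 := by
    linear_combination hs / 2 + ht / 2
  have hcross : 2 * ((s + t) / 2) * ((s - t) / 2) = lam / 2 := by
    linear_combination hs / 2 - ht / 2
  have hplus : (1 + √(1 - lam ^ 2)) / 2 = 2 * ((s + t) / 2) ^ 2 := by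
    linear_combination -hs / 2 - ht / 2 - hst
  have hminus : (1 - √(1 - lam ^ 2)) / 2 = 2 * ((s - t) / 2) ^ 2 := by
    linear_combination -hs / 2 - ht / 2 + hst
  rw [hA.sqrt_eq_smul_one_add_smul_of_involution hσ hσσ hab ?_,
    hB.sqrt_eq_smul_one_add_smul_of_involution hσ hσσ hab' ?_, hplus, hminus]
  · push_cast [neg_smul, ← sub_eq_add_neg]
    exact smul_one_add_smul_sandwich_add σ ρ _ _
  · rw [hB_eq, neg_sq, hnorm, mul_neg, hcross]
    push_cast
    module
  · rw [hA_eq, hnorm, hcross]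
    push_cast
    module

end Involution

end Matrix

open Matrix

theorem sigx_conjTranspose : sigxᴴ = sigx := by
  simp [sigx, ← ext_iff, Fin.forall_fin_two]

theorem sigx_mul_self : sigx * sigx = 1 := by
  simp [sigx, ← ext_iff, Fin.forall_fin_two]

theorem sigz_conjTranspose : sigzᴴ = sigz := by
  simp [sigz, ← ext_iff, Fin.forall_fin_two]

theorem sigz_mul_self : sigz * sigz = 1 := by
  simp [sigz, ← ext_iff, Fin.forall_fin_two]

/-- For every `λ ∈ [0,1]` and every complex 2×2 matrix `ρ`, the
unbiased von Neumann–Lüders update over the two measurement settings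
`{E_{x(+)}, E_{x(−)}}` and `{E_{z(+)}, E_{z(−)}}` equals the channel `Φ_λ`. -/
theorem luders_update_eq_phi
    (lam : ℝ) (hlam : lam ∈ Set.Icc (0 : ℝ) 1)
    (hxp : (effectXPlus lam).PosSemidef) (hxm : (effectXMinus lam).PosSemidef)
    (hzp : effectZPlus.PosSemidef) (hzm : effectZMinus.PosSemidef)
    (ρ : Matrix (Fin 2) (Fin 2) ℂ) :
    (1/2 : ℂ) • (hxp.sqrt * ρ * hxp.sqrt + hxm.sqrt * ρ * hxm.sqrt)
      + (1/2 : ℂ) • (hzp.sqrt * ρ * hzp.sqrt + hzm.sqrt * ρ * hzm.sqrt)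
      = phi lam ρ := by
  have hlam_abs : |lam| ≤ 1 := abs_le.2 ⟨by linarith [hlam.1], hlam.2⟩
  rw [luders_sum_of_involution sigx_conjTranspose sigx_mul_self hlam_abs hxp hxm rfl rfl,
    luders_sum_of_involution sigz_conjTranspose sigz_mul_self abs_one.le hzp hzm
      (by simp [effectZPlus]) (by simp [effectZMinus])]
  simp only [phi, one_pow, sub_self, Real.sqrt_zero]
  push_cast
  module
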